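/- Every ordinal coarse space is λ-strong: if (X, E) has a base for E linearly ordered by inclusion, and E' is any coarse structure on X that is λ-equivalent to E, then E' ⊆ E. -/

import Mathlib

open Set

/-- A coarse structure (ballean) on a set `X`. -/
structure CoarseStruct (X : Type*) where
  sets : Set (Set (X × X))
  diagonal_mem : Set.diagonal X ∈ sets
  diagonal_subset : ∀ E ∈ sets, Set.diagonal X ⊆ E
  comp_mem : ∀ E ∈ sets, ∀ F ∈ sets,
    {p : X × X | ∃ z, (p.1, z) ∈ E ∧ (z, p.2) ∈ F} ∈ sets
  inv_mem : ∀ E ∈ sets, {p : X × X | (p.2, p.1) ∈ E} ∈ sets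
  subset_mem : ∀ E ∈ sets, ∀ E' : Set (X × X),
    Set.diagonal X ⊆ E' → E' ⊆ E → E' ∈ sets
  cover : ∀ p : X × X, ∃ E ∈ sets, p ∈ E

namespace CoarseStruct

variable {X : Type*}

/-- The ball `E[A]` of radius `E` around `A`. -/
def ball (E : Set (X × X)) (A : Set X) : Set X := {y | ∃ a ∈ A, (a, y) ∈ E}

/-- A set is bounded if it is contained in a ball around a point. -/
def IsBounded (C : CoarseStruct X) (B : Set X) : Prop :=
  ∃ E ∈ C.sets, ∃ x : X, B ⊆ ball E {x}

/-- Closeness: `A δ B`. -/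
def Close (C : CoarseStruct X) (A B : Set X) : Prop :=
  ∃ E ∈ C.sets, A ⊆ ball E B ∧ B ⊆ ball E A

/-- Linkness: `A λ B`. -/
def Linked (C : CoarseStruct X) (A B : Set X) : Prop :=
  (C.IsBounded A ∧ C.IsBounded B) ∨
  ∃ A' B' : Set X, A' ⊆ A ∧ B' ⊆ B ∧ ¬C.IsBounded A' ∧ ¬C.IsBounded B' ∧ C.Close A' B'

def LambdaEquiv (C C' : CoarseStruct X) : Prop :=
  ∀ A B : Set X, C.Linked A B ↔ C'.Linked A B

def DeltaEquiv (C C' : CoarseStruct X) : Prop :=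
  ∀ A B : Set X, C.Close A B ↔ C'.Close A B

def Discrete (C : CoarseStruct X) : Prop :=
  ∀ E ∈ C.sets, ∃ B : Set X, C.IsBounded B ∧ ∀ x ∉ B, ball E {x} = {x}

def Large (C : CoarseStruct X) (Y : Set X) : Prop :=
  ∃ E ∈ C.sets, ball E Y = Set.univ

/-- The subballean on `Y` is discrete. -/
def DiscreteOn (C : CoarseStruct X) (Y : Set X) : Prop :=
  ∀ E ∈ C.sets, ∃ B : Set X, C.IsBounded B ∧ ∀ y ∈ Y \ B, ball E {y} ∩ Y = {y}

def CoarselyDiscrete (C : CoarseStruct X) : Prop :=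
  ∃ Y : Set X, C.Large Y ∧ C.DiscreteOn Y

def LambdaRigid (C : CoarseStruct X) : Prop :=
  ∀ C' : CoarseStruct X, LambdaEquiv C C' → C' = C

def DeltaRigid (C : CoarseStruct X) : Prop :=
  ∀ C' : CoarseStruct X, DeltaEquiv C C' → C' = C

def IsBase (C : CoarseStruct X) (B : Set (Set (X × X))) : Prop :=
  B ⊆ C.sets ∧ ∀ E ∈ C.sets, ∃ E' ∈ B, E ⊆ E'

/-- Metrizable: the coarse structure has a countable base. -/
def Metrizable (C : CoarseStruct X) : Prop :=
  ∃ B : Set (Set (X × X)), B.Countable ∧ C.IsBase B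

/-- Ordinal: the coarse structure has a base linearly ordered by inclusion. -/
def Ordinal (C : CoarseStruct X) : Prop :=
  ∃ B : Set (Set (X × X)), C.IsBase B ∧ IsChain (· ⊆ ·) B

def MacroUniform (C : CoarseStruct X) (f : X → ℝ) : Prop :=
  ∀ E ∈ C.sets, ∃ r : ℝ, 0 < r ∧
    ∀ x : X, ∀ y ∈ ball E {x}, ∀ z ∈ ball E {x}, |f y - f z| ≤ r

def Submetrizable (C : CoarseStruct X) : Prop :=
  ¬C.IsBounded Set.univ ∧ ∃ C'' : CoarseStruct X,
    C.sets ⊆ C''.sets ∧ ¬C''.IsBounded Set.univ ∧ C''.Metrizable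

def SlowlyOscillating (C : CoarseStruct X) (f : X → ℝ) : Prop :=
  ∀ E ∈ C.sets, ∀ ε : ℝ, 0 < ε → ∃ B : Set X, C.IsBounded B ∧
    ∀ x ∉ B, ∀ y ∈ ball E {x}, ∀ z ∈ ball E {x}, |f y - f z| < ε

/-- The entourage `H_{(E,Φ)}`: `H[x] = {x}` for `x ∈ Φ` and `H[x] = E[x] \ Φ` for `x ∉ Φ`. -/
def EPhiBase (E : Set (X × X)) (Φ : Set X) : Set (X × X) :=
  {p | (p.1 ∈ Φ ∧ p.1 = p.2) ∨ (p.1 ∉ Φ ∧ p.2 ∉ Φ ∧ (p.1, p.2) ∈ E)}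

/-- The family of entourages of the coarse structure `E_φ` with base `{H_{(E,Φ)}}`. -/
def EPhiSets (C : CoarseStruct X) (φ : Filter X) : Set (Set (X × X)) :=
  {E' | Set.diagonal X ⊆ E' ∧ ∃ E ∈ C.sets, ∃ Φ ∈ φ, E' ⊆ EPhiBase E Φ}

/-- The set `B♯` of ultrafilters containing the complement of every bounded set. -/
def Bsharp (C : CoarseStruct X) : Set (Ultrafilter X) :=
  {p | ∀ B : Set X, C.IsBounded B → Bᶜ ∈ p}

/-- Parallelity of ultrafilters: `p ∥ q`. -/
def Parallel (C : CoarseStruct X) (p q : Ultrafilter X) : Prop :=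
  ∃ E ∈ C.sets, ∀ P ∈ p, ball E P ∈ q

def AsympDisjoint (C : CoarseStruct X) (A B : Set X) : Prop :=
  ∀ E ∈ C.sets, C.IsBounded (ball E A ∩ ball E B)

def AsympNbhd (C : CoarseStruct X) (A U : Set X) : Prop :=
  ∀ E ∈ C.sets, C.IsBounded (ball E A \ U)

def Normal (C : CoarseStruct X) : Prop :=
  ∀ A B : Set X, C.AsympDisjoint A B →
    ∃ U V : Set X, C.AsympNbhd A U ∧ C.AsympNbhd B V ∧ Disjoint U V

end CoarseStruct

/-!
Let `κ` be the least cardinality of a base of `C`. Because `C` has a base that is a chain, any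
fewer than `κ` entourages lie in a single one; hence `C` has a monotone base `(e i)` indexed by the
well-order `κ.ord.ToType`, and any family of points indexed by an initial segment is bounded.

Suppose `E' ∈ C'`, and let `F` be its symmetrization. If `F` lies in an entourage of `C` away from a
bounded set `D`, then `F ∈ C`, since `F[D]` is bounded for `C'` and λ-equivalent structures have the
same bounded sets. Otherwise a transfinite recursion picks pairs `(aᵢ, bᵢ) ∈ F` with
`(aᵢ, bᵢ) ∉ e i` and `aᵢ, bᵢ` outside the `e i`-neighbourhood of all earlier points. The sets
`{aᵢ}` and `{bᵢ}` are unbounded and `C'`-close, hence linked, yet no unbounded parts of them are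
`C`-close: a contradiction.
-/

open Cardinal

theorem IsChain.bddAbove_of_mk_lt_cof {α : Type*} [Preorder α] {B S : Set α}
    (hB : IsChain (· ≤ ·) B) (hBc : IsCofinal B) (hS : #S < Order.cof α) : BddAbove S := by
  choose b hbB hle using fun x : S => hBc x
  have hb : ¬IsCofinal (range b) := fun hc => ((Order.cof_le hc).trans mk_range_le).not_gt hS
  obtain ⟨x, hx⟩ : ∃ x, ∀ y ∈ range b, ¬x ≤ y := by
    simpa only [IsCofinal, not_forall, not_exists, not_and] using hb
  obtain ⟨y, hyB, hxy⟩ := hBc x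
  refine ⟨y, fun s hs => (hle ⟨s, hs⟩).trans ?_⟩
  exact (hB.total (hbB ⟨s, hs⟩) hyB).resolve_right fun h => hx _ (mem_range_self _) (hxy.trans h)

theorem exists_forall_image_Iio {ι α : Type*} [Preorder ι] [WellFoundedLT ι] [Nonempty α]
    (R : ι → Set α → α → Prop) (h : ∀ (g : ι → α) i, ∃ a, R i (g '' Iio i) a) :
    ∃ f : ι → α, ∀ i, R i (f '' Iio i) (f i) := by
  classical
  let f : ι → α := wellFounded_lt.fix fun i ih =>
    if hex : ∃ a, R i {x | ∃ j, ∃ hj : j < i, ih j hj = x} a then hex.choose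
    else Classical.arbitrary α
  refine ⟨f, fun i => ?_⟩
  have hf : f i = if hex : ∃ a, R i (f '' Iio i) a then hex.choose
      else Classical.arbitrary α := by
    rw [show f i = _ from wellFounded_lt.fix_eq _ i]
    simp only [image, mem_Iio, exists_prop]
    rfl
  rw [hf, dif_pos (h f i)]
  exact (h f i).choose_spec

namespace CoarseStruct

variable {X : Type*} {C C' : CoarseStruct X} {E F : Set (X × X)} {A B : Set X}

@[simp]
theorem mem_ball_singleton {x y : X} : y ∈ ball E {x} ↔ (x, y) ∈ E := by
  simp [ball]

theorem union_mem (hE : E ∈ C.sets) (hF : F ∈ C.sets) : E ∪ F ∈ C.sets := by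
  refine C.subset_mem _ (C.comp_mem E hE F hF) _ (fun p hp => Or.inl (C.diagonal_subset E hE hp)) ?_
  rintro ⟨x, y⟩ (h | h)
  · exact ⟨y, h, C.diagonal_subset F hF rfl⟩
  · exact ⟨x, C.diagonal_subset E hE rfl, h⟩

theorem union_preimage_swap_mem (hE : E ∈ C.sets) : E ∪ Prod.swap ⁻¹' E ∈ C.sets :=
  union_mem hE (C.inv_mem E hE)

theorem swap_mem_union_preimage_swap {p : X × X} (hp : p ∈ E ∪ Prod.swap ⁻¹' E) :
    p.swap ∈ E ∪ Prod.swap ⁻¹' E :=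
  hp.symm

instance : Nonempty C.sets :=
  ⟨⟨_, C.diagonal_mem⟩⟩

instance : IsDirected C.sets (· ≤ ·) :=
  ⟨fun E F => ⟨⟨E.1 ∪ F.1, union_mem E.2 F.2⟩, subset_union_left, subset_union_right⟩⟩

theorem IsBounded.subset (hB : C.IsBounded B) (hAB : A ⊆ B) : C.IsBounded A :=
  let ⟨E, hE, x, hx⟩ := hB
  ⟨E, hE, x, hAB.trans hx⟩

theorem isBounded_empty [Nonempty X] : C.IsBounded ∅ :=
  ⟨_, C.diagonal_mem, Classical.arbitrary X, empty_subset _⟩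

theorem IsBounded.ball (hA : C.IsBounded A) (hE : E ∈ C.sets) : C.IsBounded (ball E A) := by
  obtain ⟨G, hG, x, hx⟩ := hA
  refine ⟨_, C.comp_mem G hG E hE, x, fun y ⟨a, ha, hay⟩ => ?_⟩
  exact mem_ball_singleton.2 ⟨a, mem_ball_singleton.1 (hx ha), hay⟩

theorem IsBounded.union (hA : C.IsBounded A) (hB : C.IsBounded B) : C.IsBounded (A ∪ B) := by
  obtain ⟨E, hE, x, hx⟩ := hA
  obtain ⟨F, hF, y, hy⟩ := hB
  obtain ⟨G, hG, hxy⟩ := C.cover (x, y)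
  refine ⟨_, union_mem hE (C.comp_mem G hG F hF), x, union_subset ?_ ?_⟩
  · exact fun z hz => mem_ball_singleton.2 (Or.inl (mem_ball_singleton.1 (hx hz)))
  · exact fun z hz => mem_ball_singleton.2 (Or.inr ⟨y, hxy, mem_ball_singleton.1 (hy hz)⟩)

theorem IsBounded.exists_prod_subset (hB : C.IsBounded B) : ∃ G ∈ C.sets, B ×ˢ B ⊆ G := by
  obtain ⟨E, hE, x, hx⟩ := hB
  exact ⟨_, C.comp_mem _ (C.inv_mem E hE) E hE, fun p hp =>
    ⟨x, (mem_ball_singleton.1 (hx hp.1) : (x, p.1) ∈ E), mem_ball_singleton.1 (hx hp.2)⟩⟩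

theorem aleph0_le_cof [Nonempty X] (hu : ¬C.IsBounded univ) : ℵ₀ ≤ Order.cof C.sets := by
  by_contra! hfin
  obtain ⟨s, hs, hcard⟩ := Order.exists_cof_eq C.sets
  obtain ⟨T, hT⟩ := (lt_aleph0_iff_set_finite.1 (hcard ▸ hfin)).bddAbove
  refine hu ⟨T.1, T.2, Classical.arbitrary X, fun y _ => ?_⟩
  obtain ⟨E, hE, hxy⟩ := C.cover (Classical.arbitrary X, y)
  obtain ⟨t, hts, hEt⟩ := hs ⟨E, hE⟩
  exact mem_ball_singleton.2 (hT hts (hEt hxy))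

theorem linked_empty_iff [Nonempty X] : C.Linked A ∅ ↔ C.IsBounded A := by
  refine ⟨?_, fun hA => Or.inl ⟨hA, isBounded_empty⟩⟩
  rintro (⟨hA, -⟩ | ⟨-, B', -, hB', -, hB'u, -⟩)
  · exact hA
  · exact absurd (isBounded_empty.subset hB') hB'u

theorem LambdaEquiv.isBounded_iff [Nonempty X] (h : LambdaEquiv C C') (A : Set X) :
    C.IsBounded A ↔ C'.IsBounded A := by
  rw [← linked_empty_iff, ← linked_empty_iff, h]

def IsEventuallyEntourage (C : CoarseStruct X) (F : Set (X × X)) : Prop :=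
  ∃ D, C.IsBounded D ∧ ∃ E₀ ∈ C.sets, ∀ p ∈ F, p.1 ∈ D ∨ p.2 ∈ D ∨ p ∈ E₀

/-- The pairs of `F` meeting `D` lie in `F[D] × F[D]`, and `F[D]` is bounded for `C'`, hence for
`C`. -/
theorem LambdaEquiv.mem_sets_of_isEventuallyEntourage [Nonempty X] (h : LambdaEquiv C C')
    (hF : F ∈ C'.sets) (hsymm : ∀ p ∈ F, p.swap ∈ F) (hFC : C.IsEventuallyEntourage F) :
    F ∈ C.sets := by
  obtain ⟨D, hD, E₀, hE₀, hcover⟩ := hFC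
  have hdiag := C'.diagonal_subset F hF
  have hT : C.IsBounded (ball F D) := (h.isBounded_iff _).2 (((h.isBounded_iff D).1 hD).ball hF)
  obtain ⟨G, hG, hTG⟩ := hT.exists_prod_subset
  have hDT : D ⊆ ball F D := fun x hx => ⟨x, hx, hdiag rfl⟩
  refine C.subset_mem _ (union_mem hE₀ hG) F hdiag fun p hp => ?_
  rcases hcover p hp with h1 | h2 | h0
  · exact Or.inr (hTG ⟨hDT h1, p.1, h1, hp⟩)
  · exact Or.inr (hTG ⟨⟨p.2, h2, hsymm p hp⟩, hDT h2⟩)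
  · exact Or.inl h0

theorem Ordinal.bddAbove_of_mk_lt_cof (h : C.Ordinal) {S : Set C.sets}
    (hS : #S < Order.cof C.sets) : BddAbove S := by
  obtain ⟨B₀, ⟨hB₀, hbase⟩, hchain⟩ := h
  refine IsChain.bddAbove_of_mk_lt_cof (B := {E | E.1 ∈ B₀}) ?_ ?_ hS
  · exact fun E hE F hF hne => hchain hE hF (Subtype.coe_injective.ne hne)
  · intro E
    obtain ⟨F, hF, hEF⟩ := hbase E.1 E.2
    exact ⟨⟨F, hB₀ hF⟩, hF, hEF⟩

theorem Ordinal.isBounded_of_mk_lt_cof [Nonempty X] (h : C.Ordinal) {P : Set X}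
    (hP : #P < Order.cof C.sets) : C.IsBounded P := by
  let x₀ := Classical.arbitrary X
  choose D hD hxD using fun y => C.cover (x₀, y)
  obtain ⟨G, hG⟩ := h.bddAbove_of_mk_lt_cof
    (S := (fun y => (⟨D y, hD y⟩ : C.sets)) '' P) (mk_image_le.trans_lt hP)
  exact ⟨G.1, G.2, x₀, fun y hy => mem_ball_singleton.2 (hG ⟨y, hy, rfl⟩ (hxD y))⟩

structure IsRegularBase (C : CoarseStruct X) {ι : Type*} [Preorder ι]
    (e : ι → Set (X × X)) : Prop where
  mem : ∀ i, e i ∈ C.sets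
  mono : Monotone e
  cofinal : ∀ E ∈ C.sets, ∃ i, E ⊆ e i
  isBounded_image_Iio : ∀ i (f : ι → X), C.IsBounded (f '' Iio i)

theorem Ordinal.exists_isRegularBase [Nonempty X] (h : C.Ordinal)
    (hκ : ℵ₀ ≤ Order.cof C.sets) :
    ∃ e : (Order.cof C.sets).ord.ToType → Set (X × X), C.IsRegularBase e := by
  have := Cardinal.noMaxOrder hκ
  obtain ⟨s, hs, hcard⟩ := Order.exists_cof_eq C.sets
  obtain ⟨b⟩ : Nonempty ((Order.cof C.sets).ord.ToType ≃ s) :=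
    Cardinal.eq.1 (by rw [mk_ord_toType, hcard])
  have hIio (i : (Order.cof C.sets).ord.ToType) : #(Iio i) < Order.cof C.sets := by
    simpa using mk_Iio_lt i
  have hIic (i : (Order.cof C.sets).ord.ToType) : #(Iic i) < Order.cof C.sets := by
    obtain ⟨j, hj⟩ := exists_gt i
    exact (mk_le_mk_of_subset (Iic_subset_Iio.2 hj)).trans_lt (hIio j)
  let e i := ⋃ j ∈ Iic i, (b j).1.1
  have hbe (i) : (b i).1.1 ⊆ e i := subset_biUnion_of_mem (u := fun j => (b j).1.1) self_mem_Iic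
  refine ⟨e, ⟨fun i => ?_, ?_, fun E hE => ?_, fun i f => ?_⟩⟩
  · obtain ⟨G, hG⟩ := h.bddAbove_of_mk_lt_cof (mk_image_le.trans_lt (hIic i))
      (S := (fun j => (b j).1) '' Iic i)
    exact C.subset_mem _ G.2 _ ((C.diagonal_subset _ (b i).1.2).trans (hbe i))
      (iUnion₂_subset fun j hj => hG ⟨j, hj, rfl⟩)
  · exact fun i j hij => biUnion_subset_biUnion_left (Iic_subset_Iic.2 hij)
  · obtain ⟨t, ht, hEt⟩ := hs ⟨E, hE⟩
    exact ⟨b.symm ⟨t, ht⟩, subset_trans (b := t.1) hEt (by simpa using hbe (b.symm ⟨t, ht⟩))⟩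
  · exact h.isBounded_of_mk_lt_cof (mk_image_le.trans_lt (hIio i))

section Separated

variable {ι : Type*} [LinearOrder ι]

structure IsSeparated (e : ι → Set (X × X)) (q : ι → X × X) : Prop where
  notMem : ∀ i, q i ∉ e i
  far : ∀ {i j}, j < i → ∀ x ∈ ({(q j).1, (q j).2} : Set X),
    ∀ y ∈ ({(q i).1, (q i).2} : Set X), (x, y) ∉ e i

variable {e : ι → Set (X × X)}

theorem IsSeparated.notMem_of_le {q : ι → X × X} (hq : IsSeparated e q) (hmono : Monotone e)
    (hsymm : ∀ p ∈ E, p.swap ∈ E) {μ ξ : ι} (hEμ : E ⊆ e μ) (hμξ : μ ≤ ξ) (η : ι) :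
    ((q ξ).1, (q η).2) ∉ E := by
  intro hmem
  rcases lt_trichotomy η ξ with hlt | rfl | hgt
  · exact hq.far hlt _ (by simp) _ (by simp) (hmono hμξ (hEμ (hsymm _ hmem)))
  · exact hq.notMem η (hmono hμξ (hEμ hmem))
  · exact hq.far hgt _ (by simp) _ (by simp) (hmono (hμξ.trans hgt.le) (hEμ hmem))

theorem IsRegularBase.exists_isSeparated [WellFoundedLT ι] [Nonempty X] (he : C.IsRegularBase e)
    (hF : ¬C.IsEventuallyEntourage F) : ∃ q : ι → X × X, (∀ i, q i ∈ F) ∧ IsSeparated e q := by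
  simp only [IsEventuallyEntourage, not_exists, not_and, not_forall, not_or] at hF
  refine (exists_forall_image_Iio (fun i s p => p ∈ F ∧ p ∉ e i ∧
    ∀ r ∈ s, ∀ x ∈ ({r.1, r.2} : Set X), ∀ y ∈ ({p.1, p.2} : Set X), (x, y) ∉ e i)
    fun g i => ?_).imp fun q hq =>
      ⟨fun i => (hq i).1, ⟨fun i => (hq i).2.1, fun hj => (hq _).2.2 _ ⟨_, hj, rfl⟩⟩⟩
  let D := ball (e i) ((fun j => (g j).1) '' Iio i ∪ (fun j => (g j).2) '' Iio i)
  have hD : C.IsBounded D :=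
    ((he.isBounded_image_Iio i _).union (he.isBounded_image_Iio i _)).ball (he.mem i)
  obtain ⟨p, hpF, hp1, hp2, hp⟩ := hF D hD (e i) (he.mem i)
  refine ⟨p, hpF, hp, ?_⟩
  rintro _ ⟨j, hj, rfl⟩ x hx y hy hxy
  have hxD : x ∈ (fun j => (g j).1) '' Iio i ∪ (fun j => (g j).2) '' Iio i := by
    rcases hx with rfl | rfl
    exacts [Or.inl ⟨j, hj, rfl⟩, Or.inr ⟨j, hj, rfl⟩]
  rcases hy with rfl | rfl
  exacts [hp1 ⟨x, hxD, hxy⟩, hp2 ⟨x, hxD, hxy⟩]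

variable [NoMaxOrder ι]

theorem IsRegularBase.not_isBounded_range (he : C.IsRegularBase e) {z : ι → X}
    (hz : ∀ {i j}, j < i → (z j, z i) ∉ e i) : ¬C.IsBounded (range z) := by
  rintro ⟨G, hG, x, hx⟩
  obtain ⟨τ, hτ⟩ := he.cofinal _ (C.comp_mem _ (C.inv_mem G hG) G hG)
  obtain ⟨ξ, hξ⟩ := exists_gt τ
  refine hz hξ (he.mono hξ.le (hτ ⟨x, ?_, ?_⟩))
  · exact (mem_ball_singleton.1 (hx (mem_range_self τ)) : (x, z τ) ∈ G)
  · exact mem_ball_singleton.1 (hx (mem_range_self ξ))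

theorem IsRegularBase.not_linked (he : C.IsRegularBase e) {q : ι → X × X}
    (hq : IsSeparated e q) : ¬C.Linked (range fun i => (q i).1) (range fun i => (q i).2) := by
  rintro (⟨hA, -⟩ | ⟨A', B', hA', hB', hA'u, -, E, hE, hA'B', -⟩)
  · exact he.not_isBounded_range (fun hj => hq.far hj _ (by simp) _ (by simp)) hA
  obtain ⟨μ, hμ⟩ := he.cofinal _ (union_preimage_swap_mem hE)
  obtain ⟨a, haA', ha⟩ := not_subset.1 fun hsub =>
    hA'u ((he.isBounded_image_Iio μ fun i => (q i).1).subset hsub)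
  obtain ⟨ξ, rfl⟩ := hA' haA'
  obtain ⟨b, hbB', hba⟩ := hA'B' haA'
  obtain ⟨η, rfl⟩ := hB' hbB'
  exact hq.notMem_of_le he.mono (fun _ => swap_mem_union_preimage_swap) hμ
    (not_lt.1 fun h => ha ⟨ξ, h, rfl⟩) η (Or.inr hba)

theorem IsRegularBase.exists_not_linked [WellFoundedLT ι] [Nonempty X] (he : C.IsRegularBase e)
    (hsymm : ∀ p ∈ F, p.swap ∈ F) (hF : ¬C.IsEventuallyEntourage F) :
    ∃ A B, ¬C.IsBounded A ∧ ¬C.IsBounded B ∧ A ⊆ ball F B ∧ B ⊆ ball F A ∧ ¬C.Linked A B := by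
  obtain ⟨q, hqF, hq⟩ := he.exists_isSeparated hF
  refine ⟨_, _, he.not_isBounded_range fun hj => hq.far hj _ (by simp) _ (by simp),
    he.not_isBounded_range fun hj => hq.far hj _ (by simp) _ (by simp), ?_, ?_, he.not_linked hq⟩
  · rintro _ ⟨i, rfl⟩
    exact ⟨_, mem_range_self i, hsymm _ (hqF i)⟩
  · rintro _ ⟨i, rfl⟩
    exact ⟨_, mem_range_self i, hqF i⟩

end Separated

end CoarseStruct

/-- Every ordinal coarse space is λ-strong: any λ-equivalent coarse structure
is contained in it. -/
theorem ordinal_lambdaStrong {X : Type*} (C : CoarseStruct X)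
    (h : C.Ordinal) :
    ∀ C' : CoarseStruct X, CoarseStruct.LambdaEquiv C C' → C'.sets ⊆ C.sets := by
  intro C' hCC' E' hE'
  rcases isEmpty_or_nonempty X with hX | hX
  · exact C.subset_mem _ C.diagonal_mem E' (C'.diagonal_subset E' hE') fun p _ => isEmptyElim p.1
  set F := E' ∪ Prod.swap ⁻¹' E'
  refine C.subset_mem F ?_ E' (C'.diagonal_subset E' hE') subset_union_left
  have hF' : F ∈ C'.sets := CoarseStruct.union_preimage_swap_mem hE'
  have hsymm : ∀ p ∈ F, p.swap ∈ F := fun _ => CoarseStruct.swap_mem_union_preimage_swap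
  by_cases hFC : C.IsEventuallyEntourage F
  · exact hCC'.mem_sets_of_isEventuallyEntourage hF' hsymm hFC
  have hκ := CoarseStruct.aleph0_le_cof fun hu =>
    hFC ⟨univ, hu, _, C.diagonal_mem, fun p _ => Or.inl trivial⟩
  have := Cardinal.noMaxOrder hκ
  obtain ⟨e, he⟩ := h.exists_isRegularBase hκ
  obtain ⟨A, B, hA, hB, hAB, hBA, hAB_not⟩ := he.exists_not_linked hsymm hFC
  exact absurd ((hCC' A B).2 (Or.inr ⟨A, B, subset_rfl, subset_rfl,
    (hCC'.isBounded_iff A).not.1 hA, (hCC'.isBounded_iff B).not.1 hB, F, hF', hAB, hBA⟩)) hAB_not
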